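/- arXiv:1708.05946 — 4 statements merged into one kernel-verified Lean document; each statement's English description precedes it below -/
import Mathlib

section
/- For every d ≥ 2, the unnormalized 5-qudit vector |Φ⟩ = Σ_{i,j=0}^{d−1} |i⟩⊗|j⟩⊗|i+j⟩⊗|φ_{i,j}⟩ in (ℂ^d)^{⊗5}, where |φ_{i,j}⟩ = Σ_{l=0}^{d−1} ω^{il} |l+j⟩⊗|l⟩ with ω = exp(2πi/d) and addition mod d, is 2-uniform: every reduction of the normalized state to two of the five parties is the maximally mixed state I_{d²}/d². Hence |Φ⟩ is an AME(5,d) state. -/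
open Finset

/-- Merge two assignments: take `f` on `S` and `h` off `S`. -/
def mergeOn {N d : ℕ} (S : Finset (Fin N)) (f h : Fin N → ZMod d) : Fin N → ZMod d :=
  fun t => if t ∈ S then f t else h t

/-- `Φ` is a `k`-uniform (unnormalized) pure state of `N` qudits of dimension `d`:
for every subset `S` of `k` parties, the reduced density matrix of the normalized
state on `S` is the maximally mixed state `I/d^k`.  (Entrywise, the unnormalized
reduction on `S` equals `⟨Φ,Φ⟩/d^k` times the identity; summing over all of
`Fin N → ZMod d` overcounts each off-`S` assignment `d^k` times, so the condition
reads exactly as below.) -/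
def IsUniform (N d k : ℕ) [NeZero d] (Φ : (Fin N → ZMod d) → ℂ) : Prop :=
  ∀ S : Finset (Fin N), S.card = k →
    ∀ f g : Fin N → ZMod d,
      ∑ h : Fin N → ZMod d, Φ (mergeOn S f h) * star (Φ (mergeOn S g h)) =
        if ∀ t ∈ S, f t = g t then ∑ x : Fin N → ZMod d, Φ x * star (Φ x) else 0

/-!
The state is supported on the linear code `x₂ = x₀ + x₁, x₃ = x₄ + x₁`, a copy of `(ZMod d)³`
parametrised by `(x₀, x₁, x₄)`, with amplitude the standard additive character of `x₀ x₄`.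
On the diagonal of a two-party reduction one counts codewords with two prescribed coordinates.
Off the diagonal, two codewords that agree outside `S` coincide unless `S` is `{0, 2}` or `{3, 4}`,
the supports of the weight-two codewords `(a, 0, a, 0, 0)` and `(0, 0, 0, c, c)`; for those two
pairs the surviving sum is a nontrivial character sum over `x₄`, resp. `x₀`, and vanishes.
-/

theorem mergeOn_congr {N d : ℕ} {S : Finset (Fin N)} {f g h : Fin N → ZMod d}
    (hfg : ∀ t ∈ S, f t = g t) : mergeOn S f h = mergeOn S g h := by
  funext t
  by_cases ht : t ∈ S <;> simp [mergeOn, ht, hfg]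

theorem sum_mergeOn_mul_star_eq_zero {N d : ℕ} [NeZero d] {S : Finset (Fin N)}
    {f g : Fin N → ZMod d} (Φ : (Fin N → ZMod d) → ℂ)
    (hΦ : ∀ x y, Φ x ≠ 0 → Φ y ≠ 0 → (∀ t ∉ S, x t = y t) → x = y)
    (hfg : ¬ ∀ t ∈ S, f t = g t) :
    ∑ h, Φ (mergeOn S f h) * star (Φ (mergeOn S g h)) = 0 := by
  refine Finset.sum_eq_zero fun h _ => ?_
  by_contra hne
  have hfg' := hΦ _ _ (left_ne_zero_of_mul hne) (star_ne_zero.mp (right_ne_zero_of_mul hne))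
    fun t ht => by simp [mergeOn, ht]
  exact hfg fun t ht => by simpa [mergeOn, ht] using congrFun hfg' t

theorem sum_ite_eq_add_right {G M : Type*} [AddCommGroup G] [Fintype G] [DecidableEq G]
    [AddCommMonoid M] (a b : G) (c : G → M) :
    ∑ x, (if a = x + b then c x else 0) = c (a - b) := by
  simp_rw [eq_comm (a := a), ← eq_sub_iff_add_eq, Finset.sum_ite_eq', Finset.mem_univ, if_true]

theorem sum_ite_eq_add_left {G M : Type*} [AddCommGroup G] [Fintype G] [DecidableEq G]
    [AddCommMonoid M] (a b : G) (c : G → M) :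
    ∑ x, (if a = b + x then c x else 0) = c (a - b) := by
  simp_rw [add_comm b]
  exact sum_ite_eq_add_right a b c

theorem sum_pi_succ {α M : Type*} [Fintype α] [AddCommMonoid M] {n : ℕ}
    (F : (Fin (n + 1) → α) → M) :
    ∑ h, F h = ∑ a, ∑ h : Fin n → α, F (Fin.cons a h) := by
  rw [← (Fin.consEquiv fun _ => α).sum_comp F, Fintype.sum_prod_type]
  rfl

theorem sum_pi_five {α M : Type*} [Fintype α] [AddCommMonoid M] (F : (Fin 5 → α) → M) :
    ∑ h, F h = ∑ a, ∑ b, ∑ c, ∑ e, ∑ k, F ![a, b, c, e, k] := by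
  simp only [sum_pi_succ, Fintype.sum_unique]
  rfl

theorem Finset.fin_five_of_card_eq_two (S : Finset (Fin 5)) (hS : S.card = 2) :
    S = {0, 1} ∨ S = {0, 2} ∨ S = {0, 3} ∨ S = {0, 4} ∨ S = {1, 2} ∨
      S = {1, 3} ∨ S = {1, 4} ∨ S = {2, 3} ∨ S = {2, 4} ∨ S = {3, 4} := by
  revert S
  decide

theorem ZMod.sum_stdAddChar_mul_eq_zero {d : ℕ} [NeZero d] {b : ZMod d} (hb : b ≠ 0)
    (c : ZMod d) : ∑ x, stdAddChar ((x - c) * b) = 0 := by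
  refine ((Equiv.subRight c).sum_comp fun y => stdAddChar (y * b)).trans ?_
  simpa [hb] using AddChar.sum_mulShift b (isPrimitive_stdAddChar d)

theorem ZMod.pow_val_eq_stdAddChar {d : ℕ} [NeZero d] {ω : ℂ}
    (hω : ω = Complex.exp (2 * Real.pi * Complex.I / d)) (a : ZMod d) :
    ω ^ a.val = stdAddChar a := by
  rw [hω, ← Complex.exp_nat_mul, stdAddChar_apply, toCircle_apply]
  ring_nf

namespace AME5

variable {d : ℕ}

def IsCodeword (x : Fin 5 → ZMod d) : Prop := x 2 = x 0 + x 1 ∧ x 3 = x 4 + x 1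

instance : DecidablePred (IsCodeword (d := d)) := fun _ => instDecidableAnd

theorem IsCodeword.ext {x y : Fin 5 → ZMod d} (hx : IsCodeword x) (hy : IsCodeword y)
    (h0 : x 0 = y 0) (h1 : x 1 = y 1) (h4 : x 4 = y 4) : x = y := by
  funext t
  fin_cases t <;> grind [IsCodeword]

theorem IsCodeword.eq_of_eqOn_compl {S : Finset (Fin 5)} (hS : S.card = 2) (h02 : S ≠ {0, 2})
    (h34 : S ≠ {3, 4}) {x y : Fin 5 → ZMod d} (hx : IsCodeword x) (hy : IsCodeword y)
    (hxy : ∀ t ∉ S, x t = y t) : x = y := by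
  refine hx.ext hy ?_ ?_ ?_ <;>
  rcases Finset.fin_five_of_card_eq_two S hS with
    rfl | rfl | rfl | rfl | rfl | rfl | rfl | rfl | rfl | rfl <;>
  simp at h02 h34 hxy <;> grind [IsCodeword]

def codewordEquiv : ZMod d × ZMod d × ZMod d ≃ {x : Fin 5 → ZMod d // IsCodeword x} where
  toFun p := ⟨![p.1, p.2.1, p.1 + p.2.1, p.2.2 + p.2.1, p.2.2], rfl, rfl⟩
  invFun x := (x.1 0, x.1 1, x.1 4)
  left_inv _ := rfl
  right_inv x := Subtype.ext (IsCodeword.ext ⟨rfl, rfl⟩ x.2 rfl rfl rfl)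

variable [NeZero d]

noncomputable def state (x : Fin 5 → ZMod d) : ℂ :=
  if IsCodeword x then ZMod.stdAddChar (x 0 * x 4) else 0

theorem IsCodeword.of_state_ne_zero {x : Fin 5 → ZMod d} (hx : state x ≠ 0) : IsCodeword x := by
  by_contra h
  simp [state, h] at hx

theorem state_mul_star (x y : Fin 5 → ZMod d) :
    state x * star (state y) =
      if IsCodeword x ∧ IsCodeword y then ZMod.stdAddChar (x 0 * x 4 - y 0 * y 4) else 0 := by
  unfold state
  split_ifs <;> simp_all [sub_eq_add_neg, AddChar.map_add_eq_mul, AddChar.map_neg_eq_conj]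

theorem state_mul_star_self (x : Fin 5 → ZMod d) :
    state x * star (state x) = if IsCodeword x then 1 else 0 := by
  rw [state_mul_star]
  simp

theorem sum_state_mul_star_self :
    ∑ x : Fin 5 → ZMod d, state x * star (state x) = (d : ℂ) ^ 3 := by
  rw [Fintype.sum_congr _ _ state_mul_star_self, Finset.sum_boole, ← Fintype.card_subtype,
    ← Fintype.card_congr codewordEquiv]
  simp [ZMod.card, pow_three]

theorem sum_mergeOn_state_mul_star_self {S : Finset (Fin 5)} (hS : S.card = 2)
    (f : Fin 5 → ZMod d) :
    ∑ h, state (mergeOn S f h) * star (state (mergeOn S f h)) = (d : ℂ) ^ 3 := by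
  simp only [state_mul_star_self, sum_pi_five]
  rcases Finset.fin_five_of_card_eq_two S hS with
    rfl | rfl | rfl | rfl | rfl | rfl | rfl | rfl | rfl | rfl <;>
  simp [mergeOn, IsCodeword, ite_and, -Finset.sum_boole, Finset.sum_ite_irrel,
    sum_ite_eq_add_left, sum_ite_eq_add_right] <;> ring

theorem sum_mergeOn_state_mul_star_zero_two {f g : Fin 5 → ZMod d}
    (hfg : ¬ ∀ t ∈ ({0, 2} : Finset (Fin 5)), f t = g t) :
    ∑ h, state (mergeOn {0, 2} f h) * star (state (mergeOn {0, 2} g h)) = 0 := by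
  simp only [state_mul_star, sum_pi_five]
  simp [mergeOn, IsCodeword, ite_and, -Finset.sum_boole, Finset.sum_ite_irrel,
    sum_ite_eq_add_left, sum_ite_eq_add_right]
  refine fun hg => Or.inr ?_
  have h0 : f 0 - g 0 ≠ 0 := fun h => hfg (by simp; grind)
  simpa [← sub_mul, mul_comm] using ZMod.sum_stdAddChar_mul_eq_zero h0 (f 2 - f 0)

theorem sum_mergeOn_state_mul_star_three_four {f g : Fin 5 → ZMod d}
    (hfg : ¬ ∀ t ∈ ({3, 4} : Finset (Fin 5)), f t = g t) :
    ∑ h, state (mergeOn {3, 4} f h) * star (state (mergeOn {3, 4} g h)) = 0 := by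
  simp only [state_mul_star, sum_pi_five]
  simp [mergeOn, IsCodeword, ite_and, -Finset.sum_boole, Finset.sum_ite_irrel,
    sum_ite_eq_add_left]
  intro hg
  have h4 : f 4 - g 4 ≠ 0 := fun h => hfg (by simp; grind)
  simpa [← mul_sub, ← Finset.mul_sum, NeZero.ne d] using ZMod.sum_stdAddChar_mul_eq_zero h4 0

theorem sum_mergeOn_state_mul_star_eq_zero {S : Finset (Fin 5)} (hS : S.card = 2)
    {f g : Fin 5 → ZMod d} (hfg : ¬ ∀ t ∈ S, f t = g t) :
    ∑ h, state (mergeOn S f h) * star (state (mergeOn S g h)) = 0 := by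
  by_cases h02 : S = {0, 2}
  · subst h02
    exact sum_mergeOn_state_mul_star_zero_two hfg
  by_cases h34 : S = {3, 4}
  · subst h34
    exact sum_mergeOn_state_mul_star_three_four hfg
  refine sum_mergeOn_mul_star_eq_zero state (fun x y hx hy hxy => ?_) hfg
  exact (IsCodeword.of_state_ne_zero hx).eq_of_eqOn_compl hS h02 h34
    (IsCodeword.of_state_ne_zero hy) hxy

theorem isUniform_state : IsUniform 5 d 2 state := by
  intro S hS f g
  rw [sum_state_mul_star_self]
  split_ifs with hfg
  · simp_rw [← mergeOn_congr hfg]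
    exact sum_mergeOn_state_mul_star_self hS f
  · exact sum_mergeOn_state_mul_star_eq_zero hS hfg

end AME5

theorem stmt3_general (d : ℕ) [NeZero d]
    (ω : ℂ) (hω : ω = Complex.exp (2 * Real.pi * Complex.I / d))
    (Φ : (Fin 5 → ZMod d) → ℂ)
    (hΦ : ∀ x, Φ x =
      if x 2 = x 0 + x 1 ∧ x 3 = x 4 + x 1 then ω ^ ((x 0 * x 4 : ZMod d).val) else 0) :
    IsUniform 5 d 2 Φ := by
  obtain rfl : Φ = AME5.state := funext fun x => by
    rw [hΦ, AME5.state, ZMod.pow_val_eq_stdAddChar hω]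
    rfl
  exact AME5.isUniform_state

/-- For every d ≥ 2, the unnormalized 5-qudit vector
Φ = Σ_{i,j} |i⟩|j⟩|i+j⟩ ⊗ φ_{i,j} with φ_{i,j} = Σ_l ω^{il} |l+j⟩|l⟩
is 2-uniform, i.e. an AME(5,d) state. -/
theorem stmt3 (d : ℕ) [NeZero d] (hd : 2 ≤ d)
    (ω : ℂ) (hω : ω = Complex.exp (2 * Real.pi * Complex.I / d))
    (Φ : (Fin 5 → ZMod d) → ℂ)
    (hΦ : ∀ x, Φ x =
      if x 2 = x 0 + x 1 ∧ x 3 = x 4 + x 1 then ω ^ ((x 0 * x 4 : ZMod d).val) else 0) :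
    IsUniform 5 d 2 Φ :=
  stmt3_general d ω hω Φ hΦ
end

section
/- Let U be a unitary matrix on ℂ^d ⊗ ℂ^d. If both the partial transpose U^{T₂} and the reshuffling U^R of U are unitary (U is 2-unitary), then the unnormalized vector |Φ⟩ = Σ_{n,m=0}^{d−1} |n,m⟩ ⊗ U(|n,m⟩) ∈ (ℂ^d)^{⊗4} is 2-uniform, i.e., the normalized state has all six two-party reductions equal to I_{d²}/d² (it is an AME(4,d) state). -/
/-!
In `Φ x = U (x 2, x 3) (x 0, x 1)` parties 0, 1 index the columns of `U` and parties 2, 3 its rows.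
Likewise, for each pair `{i, j}` of parties one of `U, Uᵀ, U^R, (U^R)ᵀ, U^{T₂}, (U^{T₂})ᵀ` is a
matrix `A` with `Φ x = A (x k, x l) (x i, x j)`, `{k, l}` being the complementary pair. Tracing out
`{k, l}` then computes the Gram matrix `Aᴴ A` of the columns of `A` (times `d²`, from the two
summation variables `Φ` does not see), which is `1` since all six matrices are unitary. The norm
`∑ |Φ x|² = tr (Uᴴ U)` is `d²` as well.
-/

open Finset

/-- Partial transpose of a matrix on ℂ^d ⊗ ℂ^d:
(U^{T₂})_{(n,μ),(ν,m)} = U_{(n,m),(ν,μ)}. -/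
def ptranspose {d : ℕ} (U : Matrix (ZMod d × ZMod d) (ZMod d × ZMod d) ℂ) :
    Matrix (ZMod d × ZMod d) (ZMod d × ZMod d) ℂ :=
  fun p q => U (p.1, q.2) (q.1, p.2)

/-- Reshuffling of a matrix on ℂ^d ⊗ ℂ^d:
(U^R)_{(n,ν),(m,μ)} = U_{(n,m),(ν,μ)}. -/
def reshuffle {d : ℕ} (U : Matrix (ZMod d × ZMod d) (ZMod d × ZMod d) ℂ) :
    Matrix (ZMod d × ZMod d) (ZMod d × ZMod d) ℂ :=
  fun p q => U (p.1, q.1) (p.2, q.2)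

open scoped Matrix

theorem Fintype.sum_apply_apply {ι α M : Type*} [Fintype ι] [DecidableEq ι] [Fintype α]
    [AddCommMonoid M] {k l : ι} (hkl : k ≠ l) (F : α → α → M) :
    ∑ h : ι → α, F (h k) (h l) = card α ^ (card ι - 2) • ∑ a, ∑ b, F a b := by
  rw [← (Equiv.funSplitAt k α).symm.sum_comp, Fintype.sum_prod_type, smul_sum]
  refine Finset.sum_congr rfl fun a _ => ?_
  have hrest := Fintype.sum_piFinset_apply (F a) univ (⟨l, hkl.symm⟩ : {j // j ≠ k})
  simp only [Fintype.piFinset_univ, Fintype.card_subtype_compl, Fintype.card_unique] at hrest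
  simp [hkl.symm, hrest, Nat.sub_sub]

namespace Matrix

variable {m n R : Type*} [Fintype m] [DecidableEq n] [CommSemiring R] [StarRing R]

theorem sum_mul_star_of_conjTranspose_mul_self_eq_one {A : Matrix m n R} (hA : Aᴴ * A = 1)
    (p q : n) :
    ∑ r, A r p * star (A r q) = if q = p then 1 else 0 := by
  rw [← one_apply, ← hA, mul_apply]
  simp_rw [conjTranspose_apply, mul_comm]

theorem sum_sum_mul_star_of_conjTranspose_mul_self_eq_one [Fintype n] {A : Matrix m n R}
    (hA : Aᴴ * A = 1) : ∑ p, ∑ q, A p q * star (A p q) = Fintype.card n := by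
  rw [Finset.sum_comm]
  simp [sum_mul_star_of_conjTranspose_mul_self_eq_one hA]

end Matrix

section TwoUniform

variable {d : ℕ} [NeZero d] {A : Matrix (ZMod d × ZMod d) (ZMod d × ZMod d) ℂ}

theorem sum_mergeOn_pair {N : ℕ} (hA : Aᴴ * A = 1) {Φ : (Fin N → ZMod d) → ℂ} {i j k l : Fin N}
    (hΦ : ∀ x, Φ x = A (x k, x l) (x i, x j)) (hkl : k ≠ l) (hk : k ∉ ({i, j} : Finset (Fin N)))
    (hl : l ∉ ({i, j} : Finset (Fin N))) (f g : Fin N → ZMod d) :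
    ∑ h : Fin N → ZMod d, Φ (mergeOn {i, j} f h) * star (Φ (mergeOn {i, j} g h)) =
      if ∀ t ∈ ({i, j} : Finset (Fin N)), f t = g t then (d : ℂ) ^ (N - 2) else 0 := by
  simp only [hΦ, mergeOn, hk, hl, if_false, mem_insert_self, mem_insert_of_mem,
    mem_singleton_self, if_true]
  rw [Fintype.sum_apply_apply hkl fun a b => A (a, b) (f i, f j) * star (A (a, b) (g i, g j)),
    ← Fintype.sum_prod_type', Matrix.sum_mul_star_of_conjTranspose_mul_self_eq_one hA]
  have hfg : (g i, g j) = (f i, f j) ↔ ∀ t ∈ ({i, j} : Finset (Fin N)), f t = g t := by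
    simp only [forall_mem_insert, Prod.mk.injEq, eq_comm (a := g _), mem_singleton, forall_eq]
  simp [hfg]

theorem sum_mul_star_eq_sq (hA : Aᴴ * A = 1) {Φ : (Fin 4 → ZMod d) → ℂ}
    (hΦ : ∀ x, Φ x = A (x 2, x 3) (x 0, x 1)) :
    ∑ x, Φ x * star (Φ x) = (d : ℂ) ^ 2 := by
  let e : (Fin 4 → ZMod d) ≃ (ZMod d × ZMod d) × (ZMod d × ZMod d) :=
    { toFun x := ((x 2, x 3), (x 0, x 1))
      invFun pq := ![pq.2.1, pq.2.2, pq.1.1, pq.1.2]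
      left_inv x := by ext i; fin_cases i <;> rfl
      right_inv _ := rfl }
  rw [Fintype.sum_equiv e _ (fun pq => A pq.1 pq.2 * star (A pq.1 pq.2)) fun x => by rw [hΦ]; rfl,
    Fintype.sum_prod_type, Matrix.sum_sum_mul_star_of_conjTranspose_mul_self_eq_one hA]
  simp [sq]

end TwoUniform

/-- if U is unitary and both U^{T₂} and U^R are unitary
(U is 2-unitary), then Φ = Σ_{n,m} |n,m⟩ ⊗ U|n,m⟩ is a 2-uniform 4-qudit state
(an AME(4,d) state). -/
theorem stmt13 (d : ℕ) [NeZero d]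
    (U : Matrix (ZMod d × ZMod d) (ZMod d × ZMod d) ℂ)
    (hU : U ∈ Matrix.unitaryGroup (ZMod d × ZMod d) ℂ)
    (hT : ptranspose U ∈ Matrix.unitaryGroup (ZMod d × ZMod d) ℂ)
    (hR : reshuffle U ∈ Matrix.unitaryGroup (ZMod d × ZMod d) ℂ)
    (Φ : (Fin 4 → ZMod d) → ℂ)
    (hΦ : ∀ x, Φ x = U (x 2, x 3) (x 0, x 1)) :
    IsUniform 4 d 2 Φ := by
  intro S hS f g
  rw [sum_mul_star_eq_sq hU.1 hΦ]
  -- each pair is listed in the order in which it indexes the columns of the matrix used for it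
  have hpairs : S = {0, 1} ∨ S = {2, 3} ∨ S = {3, 1} ∨ S = {2, 0} ∨ S = {0, 3} ∨ S = {2, 1} := by
    revert S; decide
  have hUt := Matrix.transpose_mem_unitaryGroup_iff.2 hU
  have hRt := Matrix.transpose_mem_unitaryGroup_iff.2 hR
  have hTt := Matrix.transpose_mem_unitaryGroup_iff.2 hT
  rcases hpairs with rfl | rfl | rfl | rfl | rfl | rfl
  · apply sum_mergeOn_pair hU.1 (k := 2) (l := 3) hΦ <;> decide
  · apply sum_mergeOn_pair hUt.1 (k := 0) (l := 1) hΦ <;> decide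
  · apply sum_mergeOn_pair hR.1 (k := 2) (l := 0) hΦ <;> decide
  · apply sum_mergeOn_pair hRt.1 (k := 3) (l := 1) hΦ <;> decide
  · apply sum_mergeOn_pair hT.1 (k := 2) (l := 1) hΦ <;> decide
  · apply sum_mergeOn_pair hTt.1 (k := 0) (l := 3) hΦ <;> decide
end

section
/- If d ≥ 2 is an integer, the vectors |ψ_{i,j}⟩ = |i+j mod d⟩ ⊗ |φ_{i,j}⟩ ∈ ℂ^d ⊗ (ℂ^d ⊗ ℂ^d), for i,j ∈ ℤ/d with |φ_{i,j}⟩ the normalized generalized Bell states, satisfy: (1) the d² vectors are pairwise orthogonal; (2) for each fixed i, the vector Σ_{j} |j⟩ ⊗ |ψ_{i,j}⟩ ∈ (ℂ^d)^{⊗4} (suitably normalized) has all four single-party reductions maximally mixed; (3) likewise for each fixed j, the vector Σ_i |i⟩ ⊗ |ψ_{i,j}⟩ has all single-party reductions maximally mixed. -/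
open Finset

/-!
Orthogonality is a matter of supports: `ψ i j` lives on the triples `(i + j, v + j, v)`, and two
such supports meet only when `(i, j) = (i', j')`.

A row or column sum is a state of constant modulus `1 / √d` on the `d²` rows
`(s, σ s, v + τ s, v)` of a four-column array over `ZMod d`, with `σ` a translation. Each column of
this array takes every value exactly `d` times, and any three columns determine the row: it is an
irredundant orthogonal array of strength one. As for every constant-modulus state on an
irredundant orthogonal array of strength `k` (Goyeneche–Życzkowski), the reduction to `k`
parties is then maximally mixed: irredundancy kills the off-diagonal terms, and the index
condition makes the diagonal ones equal.
-/

section OrthogonalArray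

variable {N d : ℕ}

theorem card_filter_mergeOn_eq [NeZero d] (S : Finset (Fin N)) (f x : Fin N → ZMod d) :
    #{h | mergeOn S f h = x} = if ∀ t ∈ S, x t = f t then d ^ #S else 0 := by
  split_ifs with hx
  · have hfilter : ({h | mergeOn S f h = x} : Finset _) =
        Fintype.piFinset fun t => if t ∈ S then univ else {x t} := by
      ext h
      simp only [mem_filter, mem_univ, true_and, Fintype.mem_piFinset, funext_iff, mergeOn]
      refine forall_congr' fun t => ?_
      by_cases ht : t ∈ S <;> simp [ht, hx t, eq_comm]
    rw [hfilter, Fintype.card_piFinset]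
    simp [apply_ite card, prod_ite_mem, ZMod.card]
  · refine card_eq_zero.mpr (filter_eq_empty_iff.mpr fun h _ hh => hx fun t ht => ?_)
    simp [← hh, mergeOn, ht]

theorem sum_mergeOn [NeZero d] {M : Type*} [AddCommMonoid M] (S : Finset (Fin N))
    (f : Fin N → ZMod d) (F : (Fin N → ZMod d) → M) :
    ∑ h, F (mergeOn S f h) = d ^ #S • ∑ x with ∀ t ∈ S, x t = f t, F x := by
  rw [← sum_fiberwise univ (mergeOn S f), smul_sum, sum_filter]
  refine sum_congr rfl fun x _ => ?_
  rw [sum_congr rfl fun h hh => congrArg F (mem_filter.mp hh).2, sum_const,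
    card_filter_mergeOn_eq]
  split_ifs <;> simp

variable {P : Type*}

def IsIrredundant (k : ℕ) (e : P → Fin N → ZMod d) : Prop :=
  ∀ S : Finset (Fin N), #S = k → ∀ p q, (∀ t ∉ S, e p t = e q t) → p = q

def IsOrthogonalArray [Fintype P] (k : ℕ) (e : P → Fin N → ZMod d) : Prop :=
  ∀ S : Finset (Fin N), #S = k → ∀ f : Fin N → ZMod d,
    d ^ k * #{p | ∀ t ∈ S, e p t = f t} = Fintype.card P

theorem isUniform_of_isOrthogonalArray [NeZero d] [Fintype P] {k : ℕ} {e : P → Fin N → ZMod d}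
    {Φ : (Fin N → ZMod d) → ℂ} {c : ℂ} (hoa : IsOrthogonalArray k e) (hirr : IsIrredundant k e)
    (hsupp : ∀ x, Φ x ≠ 0 → x ∈ Set.range e) (hmod : ∀ p, Φ (e p) * star (Φ (e p)) = c) :
    IsUniform N d k Φ := by
  intro S hS f g
  have hinj : e.Injective := fun p q h => hirr S hS p q fun t _ => congrFun h t
  have hnorm : ∀ s : Finset (Fin N → ZMod d),
      ∑ x ∈ s, Φ x * star (Φ x) = #{p | e p ∈ s} • c := by
    intro s
    rw [← sum_const, eq_comm]
    refine sum_of_injOn e hinj.injOn (fun p hp => (mem_filter.mp hp).2) (fun x _ hx => ?_)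
      fun p _ => (hmod p).symm
    by_contra hΦ
    obtain ⟨p, rfl⟩ := hsupp x (left_ne_zero_of_mul hΦ)
    exact hx ⟨p, by simp_all, rfl⟩
  split_ifs with hfg
  · have hmerge : mergeOn S g = mergeOn S f := by
      ext h t
      by_cases ht : t ∈ S <;> simp [mergeOn, ht, hfg t]
    rw [hmerge, sum_mergeOn S f fun x => Φ x * star (Φ x), hnorm, hnorm, smul_smul, hS]
    simp only [mem_filter, mem_univ, true_and]
    rw [hoa S hS f, filter_true, card_univ]
  · refine sum_eq_zero fun h _ => ?_
    by_contra hne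
    obtain ⟨p, hp⟩ := hsupp _ (left_ne_zero_of_mul hne)
    obtain ⟨q, hq⟩ := hsupp _ (star_ne_zero.mp (right_ne_zero_of_mul hne))
    have hpq : p = q := hirr S hS p q fun t ht => by simp [hp, hq, mergeOn, ht]
    subst hpq
    exact hfg fun t ht => by simpa [mergeOn, ht] using congrFun (hp.symm.trans hq) t

end OrthogonalArray

section ShiftArray

variable {d : ℕ}

def shiftArray (σ : Equiv.Perm (ZMod d)) (τ : ZMod d → ZMod d) (p : ZMod d × ZMod d) :
    Fin 4 → ZMod d :=
  ![p.1, σ p.1, p.2 + τ p.1, p.2]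

theorem isIrredundant_shiftArray (σ : Equiv.Perm (ZMod d)) (τ : ZMod d → ZMod d) :
    IsIrredundant 1 (shiftArray σ τ) := by
  rintro S hS ⟨s, v⟩ ⟨s', v'⟩ h
  obtain ⟨t, rfl⟩ := card_eq_one.mp hS
  fin_cases t <;> simp [shiftArray, Fin.forall_fin_succ] at h <;> grind

theorem card_filter_shiftArray_eq [NeZero d] (σ : Equiv.Perm (ZMod d)) (τ : ZMod d → ZMod d)
    (t : Fin 4) (a : ZMod d) : #{p | shiftArray σ τ p t = a} = d := by
  fin_cases t
  · show #{p : ZMod d × ZMod d | p.1 = a} = d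
    rw [card_filter, Fintype.sum_prod_type]
    simp [apply_ite card, ZMod.card]
  · show #{p : ZMod d × ZMod d | σ p.1 = a} = d
    rw [card_filter, Fintype.sum_prod_type]
    simp [← Equiv.eq_symm_apply]
  · show #{p : ZMod d × ZMod d | p.2 + τ p.1 = a} = d
    rw [card_filter, Fintype.sum_prod_type]
    simp [← eq_sub_iff_add_eq, ZMod.card]
  · show #{p : ZMod d × ZMod d | p.2 = a} = d
    rw [card_filter, Fintype.sum_prod_type]
    simp [ZMod.card]

theorem isOrthogonalArray_shiftArray [NeZero d] (σ : Equiv.Perm (ZMod d))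
    (τ : ZMod d → ZMod d) : IsOrthogonalArray 1 (shiftArray σ τ) := by
  rintro S hS f
  obtain ⟨t, rfl⟩ := card_eq_one.mp hS
  simp [card_filter_shiftArray_eq, ZMod.card]

theorem isUniform_of_support_shiftArray [NeZero d] {σ : Equiv.Perm (ZMod d)}
    {τ : ZMod d → ZMod d} {Φ : (Fin 4 → ZMod d) → ℂ} {c : ℂ}
    (hsupp : ∀ x, Φ x ≠ 0 → x 1 = σ (x 0) ∧ x 2 = x 3 + τ (x 0))
    (hmod : ∀ p, Φ (shiftArray σ τ p) * star (Φ (shiftArray σ τ p)) = c) :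
    IsUniform 4 d 1 Φ := by
  refine isUniform_of_isOrthogonalArray (isOrthogonalArray_shiftArray σ τ)
    (isIrredundant_shiftArray σ τ) (fun x hx => ⟨(x 0, x 3), ?_⟩) hmod
  obtain ⟨h1, h2⟩ := hsupp x hx
  ext t
  fin_cases t <;> simp [shiftArray, h1, h2]

end ShiftArray

theorem inv_sqrt_mul_pow_mul_star_self {ω : ℂ} (hω : ‖ω‖ = 1) (d n : ℕ) :
    ((1 / Real.sqrt d : ℝ) * ω ^ n) * star ((1 / Real.sqrt d : ℝ) * ω ^ n) = (d : ℂ)⁻¹ := by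
  rw [Complex.star_def, Complex.mul_conj']
  simp only [norm_mul, norm_pow, hω, one_pow, mul_one, Complex.norm_real, Real.norm_eq_abs,
    abs_of_nonneg (by positivity : 0 ≤ 1 / Real.sqrt d)]
  norm_cast
  rw [div_pow, Real.sq_sqrt d.cast_nonneg]
  push_cast
  ring

theorem stmt16_general (d : ℕ) [NeZero d]
    (ω : ℂ) (hω : ω = Complex.exp (2 * Real.pi * Complex.I / d))
    (ψ : ZMod d → ZMod d → ZMod d → ZMod d → ZMod d → ℂ)
    (hψ : ∀ i j a u v, ψ i j a u v =
      (if a = i + j then 1 else 0) *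
        ((1 / Real.sqrt d : ℝ) * ω ^ ((i * v : ZMod d).val) * (if u = v + j then 1 else 0))) :
    (∀ i j i' j' : ZMod d, (i, j) ≠ (i', j') →
      ∑ a : ZMod d, ∑ u : ZMod d, ∑ v : ZMod d,
        star (ψ i j a u v) * ψ i' j' a u v = 0) ∧
    (∀ i : ZMod d, IsUniform 4 d 1 (fun x => ψ i (x 0) (x 1) (x 2) (x 3))) ∧
    (∀ j : ZMod d, IsUniform 4 d 1 (fun x => ψ (x 0) j (x 1) (x 2) (x 3))) := by
  have hω₁ : ‖ω‖ = 1 :=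
    hω ▸ (Complex.isPrimitiveRoot_exp d (NeZero.ne d)).norm'_eq_one (NeZero.ne d)
  have hsupp : ∀ {i j a u v}, ψ i j a u v ≠ 0 → a = i + j ∧ u = v + j := by
    intro i j a u v h
    constructor <;> by_contra hc <;> simp [hψ, hc] at h
  have hmod : ∀ i j v, ψ i j (i + j) (v + j) v * star (ψ i j (i + j) (v + j) v) = (d : ℂ)⁻¹ := by
    intro i j v
    simpa [hψ] using inv_sqrt_mul_pow_mul_star_self hω₁ d (i * v).val
  refine ⟨fun i j i' j' hne => ?_, fun i => ?_, fun j => ?_⟩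
  · refine sum_eq_zero fun a _ => sum_eq_zero fun u _ => sum_eq_zero fun v _ => ?_
    by_contra h
    obtain ⟨ha, hu⟩ := hsupp (star_ne_zero.mp (left_ne_zero_of_mul h))
    obtain ⟨ha', hu'⟩ := hsupp (right_ne_zero_of_mul h)
    exact hne (by grind)
  · exact isUniform_of_support_shiftArray (σ := Equiv.addLeft i) (τ := id)
      (fun _ hx => hsupp hx) fun p => hmod i p.1 p.2
  · exact isUniform_of_support_shiftArray (σ := Equiv.addRight j) (τ := fun _ => j)
      (fun _ hx => hsupp hx) fun p => hmod p.1 j p.2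

/-- the vectors ψ_{i,j} = |i+j⟩ ⊗ |φ_{i,j}⟩ (with φ_{i,j} the
normalized generalized Bell states) are pairwise orthogonal, and all row sums
Σ_j |j⟩⊗ψ_{i,j} and column sums Σ_i |i⟩⊗ψ_{i,j} are 1-uniform 4-qudit states. -/
theorem stmt16 (d : ℕ) [NeZero d] (hd : 2 ≤ d)
    (ω : ℂ) (hω : ω = Complex.exp (2 * Real.pi * Complex.I / d))
    (ψ : ZMod d → ZMod d → ZMod d → ZMod d → ZMod d → ℂ)
    (hψ : ∀ i j a u v, ψ i j a u v =
      (if a = i + j then 1 else 0) *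
        ((1 / Real.sqrt d : ℝ) * ω ^ ((i * v : ZMod d).val) * (if u = v + j then 1 else 0))) :
    (∀ i j i' j' : ZMod d, (i, j) ≠ (i', j') →
      ∑ a : ZMod d, ∑ u : ZMod d, ∑ v : ZMod d,
        star (ψ i j a u v) * ψ i' j' a u v = 0) ∧
    (∀ i : ZMod d, IsUniform 4 d 1 (fun x => ψ i (x 0) (x 1) (x 2) (x 3))) ∧
    (∀ j : ZMod d, IsUniform 4 d 1 (fun x => ψ (x 0) j (x 1) (x 2) (x 3))) :=
  stmt16_general d ω hω ψ hψ
end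

section
/- Let p be a prime, ω = exp(2πi/p), and for i₁,i₂,i₃ ∈ ℤ/p define |φ_{i₁,i₂,i₃}⟩ = p^{−3/2} Σ_{i₄,i₅,i₆} ω^{A(i₁,…,i₆)} |i₄,i₅,i₆⟩ where A(i₁,…,i₆) = i₁i₂+i₂i₃+i₃i₄+i₄i₅+i₅i₆+i₆i₁+i₁i₃+i₄i₆+i₂i₅ (mod p). Then the p³ vectors {|φ_{i₁,i₂,i₃}⟩} form an orthonormal basis of (ℂ^p)^{⊗3}. -/
/-!
With ψ the standard additive character of `ZMod p`, `ω ^ a.val = ψ a`, so `star φᵢ * φⱼ` is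
`p⁻³ ψ (A(j, ·) - A(i, ·))`. In this difference every monomial free of the first three indices
cancels, leaving a constant plus a phase linear in `(i₄, i₅, i₆)` with coefficients
`(j₃ - i₃, j₂ - i₂, j₁ - i₁)`. The inner product thus factors into three character sums
`∑ₓ ψ (b x) = p · [b = 0]`.
-/

open Finset

lemma ZMod.exp_two_pi_I_div_pow_val {N : ℕ} [NeZero N] (a : ZMod N) :
    Complex.exp (2 * Real.pi * Complex.I / N) ^ a.val = ZMod.stdAddChar a := by
  rw [ZMod.stdAddChar_apply, ZMod.toCircle_apply, ← Complex.exp_nat_mul]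
  ring_nf

lemma AddChar.star_apply_mul_apply {G : Type*} [Finite G] [AddCommGroup G] (ψ : AddChar G ℂ)
    (x y : G) : star (ψ x) * ψ y = ψ (y - x) := by
  rw [sub_eq_add_neg, AddChar.map_add_eq_mul, AddChar.map_neg_eq_conj, mul_comm]
  rfl

lemma AddChar.sum_sum_sum_apply_add_mul {R R' : Type*} [CommRing R] [Fintype R]
    [DecidableEq R] [CommRing R'] [IsDomain R'] {ψ : AddChar R R'} (hψ : ψ.IsPrimitive)
    (d b₁ b₂ b₃ : R) :
    ∑ x, ∑ y, ∑ z, ψ (d + b₁ * x + b₂ * y + b₃ * z) =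
      if b₁ = 0 ∧ b₂ = 0 ∧ b₃ = 0 then (Fintype.card R : R') ^ 3 * ψ d else 0 := by
  simp only [AddChar.map_add_eq_mul, ← Finset.mul_sum, ← Finset.sum_mul]
  simp only [mul_comm b₁, mul_comm b₂, mul_comm b₃, AddChar.sum_mulShift _ hψ]
  split_ifs <;> simp_all
  ring

lemma Real.inv_rpow_two_inv_sq {x : ℝ} (hx : 0 ≤ x) : ((x ^ (2 : ℝ)⁻¹)⁻¹) ^ 2 = x⁻¹ := by
  rw [inv_pow, ← Real.rpow_natCast, ← Real.rpow_mul hx]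
  norm_num

theorem stmt19_general (p : ℕ) [NeZero p]
    (ω : ℂ) (hω : ω = Complex.exp (2 * Real.pi * Complex.I / p))
    (φ : ZMod p → ZMod p → ZMod p → ZMod p → ZMod p → ZMod p → ℂ)
    (hφ : ∀ i₁ i₂ i₃ i₄ i₅ i₆, φ i₁ i₂ i₃ i₄ i₅ i₆ =
      (((p : ℝ) ^ (3 : ℕ)) ^ ((2 : ℝ)⁻¹) )⁻¹ *
        ω ^ ((i₁*i₂ + i₂*i₃ + i₃*i₄ + i₄*i₅ + i₅*i₆ + i₆*i₁ + i₁*i₃ + i₄*i₆ + i₂*i₅ :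
          ZMod p).val)) :
    ∀ i₁ i₂ i₃ j₁ j₂ j₃ : ZMod p,
      ∑ i₄ : ZMod p, ∑ i₅ : ZMod p, ∑ i₆ : ZMod p,
        star (φ i₁ i₂ i₃ i₄ i₅ i₆) * φ j₁ j₂ j₃ i₄ i₅ i₆ =
      if (i₁, i₂, i₃) = (j₁, j₂, j₃) then 1 else 0 := by
  intro i₁ i₂ i₃ j₁ j₂ j₃
  set c : ℝ := (((p : ℝ) ^ (3 : ℕ)) ^ ((2 : ℝ)⁻¹))⁻¹
  have hc : (c : ℂ) * c = ((p : ℂ) ^ 3)⁻¹ := by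
    rw [← Complex.ofReal_mul, ← sq, Real.inv_rpow_two_inv_sq (by positivity)]
    push_cast
    rfl
  have hterm : ∀ i₄ i₅ i₆, star (φ i₁ i₂ i₃ i₄ i₅ i₆) * φ j₁ j₂ j₃ i₄ i₅ i₆ =
      ((p : ℂ) ^ 3)⁻¹ * ZMod.stdAddChar ((j₁*j₂ + j₂*j₃ + j₁*j₃) - (i₁*i₂ + i₂*i₃ + i₁*i₃)
        + (j₃ - i₃) * i₄ + (j₂ - i₂) * i₅ + (j₁ - i₁) * i₆) := by
    intro i₄ i₅ i₆
    simp only [hφ, hω, ZMod.exp_two_pi_I_div_pow_val, star_mul', Complex.star_def,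
      Complex.conj_ofReal]
    rw [mul_mul_mul_comm, hc, ← Complex.star_def, AddChar.star_apply_mul_apply]
    congr 2
    ring
  simp only [hterm, ← mul_sum, AddChar.sum_sum_sum_apply_add_mul (ZMod.isPrimitive_stdAddChar p),
    ZMod.card, sub_eq_zero, Prod.mk.injEq]
  by_cases h : i₁ = j₁ ∧ i₂ = j₂ ∧ i₃ = j₃
  · obtain ⟨rfl, rfl, rfl⟩ := h
    have hp : (p : ℂ) ≠ 0 := NeZero.ne _
    simp [hp]
  · rw [if_neg (by tauto), if_neg h, mul_zero]

/-- for a prime p and ω = exp(2πi/p), the p³ vectors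
φ_{i₁,i₂,i₃} = p^{−3/2} Σ_{i₄,i₅,i₆} ω^{A(i₁,…,i₆)} |i₄,i₅,i₆⟩, with
A = i₁i₂+i₂i₃+i₃i₄+i₄i₅+i₅i₆+i₆i₁+i₁i₃+i₄i₆+i₂i₅ (mod p), form an orthonormal
basis of (ℂ^p)^{⊗3} (p³ pairwise orthonormal vectors in a p³-dimensional space). -/
theorem stmt19 (p : ℕ) [NeZero p] (hp : p.Prime)
    (ω : ℂ) (hω : ω = Complex.exp (2 * Real.pi * Complex.I / p))
    (φ : ZMod p → ZMod p → ZMod p → ZMod p → ZMod p → ZMod p → ℂ)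
    (hφ : ∀ i₁ i₂ i₃ i₄ i₅ i₆, φ i₁ i₂ i₃ i₄ i₅ i₆ =
      (((p : ℝ) ^ (3 : ℕ)) ^ ((2 : ℝ)⁻¹) )⁻¹ *
        ω ^ ((i₁*i₂ + i₂*i₃ + i₃*i₄ + i₄*i₅ + i₅*i₆ + i₆*i₁ + i₁*i₃ + i₄*i₆ + i₂*i₅ :
          ZMod p).val)) :
    ∀ i₁ i₂ i₃ j₁ j₂ j₃ : ZMod p,
      ∑ i₄ : ZMod p, ∑ i₅ : ZMod p, ∑ i₆ : ZMod p,
        star (φ i₁ i₂ i₃ i₄ i₅ i₆) * φ j₁ j₂ j₃ i₄ i₅ i₆ =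
      if (i₁, i₂, i₃) = (j₁, j₂, j₃) then 1 else 0 :=
  stmt19_general p ω hω φ hφ
end
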